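/- arXiv:2003.12761 — 3 statements merged into one kernel-verified Lean document; each statement's English description precedes it below -/
import Mathlib

section
/- (Varah's bound) Let A be an n×n real matrix that is strictly diagonally dominant by rows, i.e. |A_{ii}| > Σ_{j≠i} |A_{ij}| for every i. Then A is invertible and |A^{-1}|_∞ ≤ 1 / min_{1≤i≤n} ( |A_{ii}| − Σ_{j≠i} |A_{ij}| ). -/
open Real Finset

/-- The matrix norm induced by the vector `∞`-norm:
`|M|_∞ = max_i Σ_j |M i j|`. -/
noncomputable def matInfNorm {m n : ℕ} (M : Matrix (Fin m) (Fin n) ℝ) : ℝ :=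
  ⨆ i, ∑ j, |M i j|

/-- (Varah's bound) If `A` is strictly diagonally dominant by rows, then `A` is
invertible and `|A⁻¹|_∞ ≤ 1 / min_i (|A_{ii}| - Σ_{j ≠ i} |A_{ij}|)`. -/
theorem varah_bound (n : ℕ) (hn : 0 < n) (A : Matrix (Fin n) (Fin n) ℝ)
    (hdd : ∀ i, ∑ j ∈ Finset.univ.erase i, |A i j| < |A i i|) :
    IsUnit A ∧
    matInfNorm A⁻¹ ≤ 1 / (⨅ i, (|A i i| - ∑ j ∈ Finset.univ.erase i, |A i j|)) := by
  haveI : Nonempty (Fin n) := ⟨⟨0, hn⟩⟩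
  have hdet : A.det ≠ 0 := by
    apply det_ne_zero_of_sum_row_lt_diag
    simpa [Real.norm_eq_abs] using hdd
  have hunit : IsUnit A := (Matrix.isUnit_iff_isUnit_det A).2 (isUnit_iff_ne_zero.2 hdet)
  refine ⟨hunit, ?_⟩
  set f : Fin n → ℝ := fun i => |A i i| - ∑ j ∈ Finset.univ.erase i, |A i j| with hf
  set α : ℝ := ⨅ i, f i with hα
  have hfpos : ∀ i, 0 < f i := fun i => sub_pos.2 (hdd i)
  have hbdd : BddBelow (Set.range f) := (Set.finite_range f).bddBelow
  have hαpos : 0 < α := by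
    obtain ⟨i0, hi0⟩ := Finite.exists_min f
    exact lt_of_lt_of_le (hfpos i0) (le_ciInf hi0)
  have hαle : ∀ i, α ≤ f i := fun i => ciInf_le hbdd i
  -- key estimate: if all entries of A.mulVec x are ≤ 1 in abs, then all |x i| ≤ 1/α
  have key : ∀ x : Fin n → ℝ, (∀ i, |(A.mulVec x) i| ≤ 1) → ∀ i, |x i| ≤ 1 / α := by
    intro x hx i
    obtain ⟨i0, hi0⟩ := Finite.exists_max (fun i => |x i|)
    have h1 : f i0 * |x i0| ≤ |(A.mulVec x) i0| := by
      have hAx : (A.mulVec x) i0 = A i0 i0 * x i0 + ∑ j ∈ Finset.univ.erase i0, A i0 j * x j := by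
        rw [Matrix.mulVec, dotProduct]
        rw [← Finset.add_sum_erase _ _ (Finset.mem_univ i0)]
      have h2 : |∑ j ∈ Finset.univ.erase i0, A i0 j * x j|
          ≤ (∑ j ∈ Finset.univ.erase i0, |A i0 j|) * |x i0| := by
        calc |∑ j ∈ Finset.univ.erase i0, A i0 j * x j|
            ≤ ∑ j ∈ Finset.univ.erase i0, |A i0 j * x j| := Finset.abs_sum_le_sum_abs _ _
          _ ≤ ∑ j ∈ Finset.univ.erase i0, |A i0 j| * |x i0| := by
              apply Finset.sum_le_sum
              intro j _
              rw [abs_mul]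
              exact mul_le_mul_of_nonneg_left (hi0 j) (abs_nonneg _)
          _ = (∑ j ∈ Finset.univ.erase i0, |A i0 j|) * |x i0| := by
              rw [Finset.sum_mul]
      calc f i0 * |x i0|
          = |A i0 i0| * |x i0| - (∑ j ∈ Finset.univ.erase i0, |A i0 j|) * |x i0| := by
            rw [hf]; ring
        _ ≤ |A i0 i0 * x i0| - |∑ j ∈ Finset.univ.erase i0, A i0 j * x j| := by
            rw [abs_mul]; linarith
        _ ≤ |A i0 i0 * x i0 + ∑ j ∈ Finset.univ.erase i0, A i0 j * x j| := by
            have habs := abs_add_le (A i0 i0 * x i0 + ∑ j ∈ Finset.univ.erase i0, A i0 j * x j)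
              (-(∑ j ∈ Finset.univ.erase i0, A i0 j * x j))
            simp only [add_neg_cancel_right, abs_neg] at habs
            linarith
        _ = |(A.mulVec x) i0| := by rw [hAx]
    have h3 : α * |x i0| ≤ 1 := by
      have := mul_le_mul_of_nonneg_right (hαle i0) (abs_nonneg (x i0))
      exact le_trans this (le_trans h1 (hx i0))
    have h4 : |x i0| ≤ 1 / α := (le_div_iff₀ hαpos).2 (by linarith [h3])
    exact le_trans (hi0 i) h4
  -- now bound each row sum of A⁻¹
  rw [matInfNorm]
  apply ciSup_le
  intro i
  set s : Fin n → ℝ := fun j => if 0 ≤ A⁻¹ i j then 1 else -1 with hs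
  set x : Fin n → ℝ := A⁻¹.mulVec s with hxdef
  have hAx : A.mulVec x = s := by
    rw [hxdef, Matrix.mulVec_mulVec, Matrix.mul_nonsing_inv A (isUnit_iff_ne_zero.2 hdet), Matrix.one_mulVec]
  have hs1 : ∀ j, |s j| ≤ 1 := by
    intro j
    by_cases h : 0 ≤ A⁻¹ i j <;> simp [hs, h]
  have hxi : x i = ∑ j, |A⁻¹ i j| := by
    rw [hxdef, Matrix.mulVec, dotProduct]
    apply Finset.sum_congr rfl
    intro j _
    by_cases h : 0 ≤ A⁻¹ i j
    · simp [hs, h, abs_of_nonneg h]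
    · simp only [hs, if_neg h]
      rw [abs_of_neg (lt_of_not_ge h)]; ring
  have hk := key x (by rw [hAx]; exact hs1) i
  rw [hxi, abs_of_nonneg (Finset.sum_nonneg fun j _ => abs_nonneg _)] at hk
  exact hk
end

section
/- (Boundedness of the IMEX solution, Lemma 2.1) Let n_ξ ≥ 2, n_x ≥ 1 be integers, γ, ν, τ, h_ξ > 0 reals, A = (1+γτ) I_{n_ξ} − (τν/h_ξ²) Δ with Δ the n_ξ×n_ξ Neumann finite-difference Laplacian matrix. Suppose |W| ≤ C_W, |S| ≤ C_S, the quadrature weights are nonnegative with (Σ_j ρ_j)(Σ_i σ_i) = μ, and the input matrices G^n ∈ ℝ^{n_ξ×n_x} have all entries bounded in absolute value by C_G. Then for every initial matrix V^0 ∈ ℝ^{n_ξ×n_x} there is a unique sequence (V^n)_{n∈ℕ} satisfying the IMEX scheme A V^n = V^{n−1} + τ N(V^{n−1}) + τ G^{n−1} for all n ≥ 1, this sequence is bounded, and |V^n|_∞ ≤ |V^0|_∞ + n_x ( μ C_W C_S + C_G ) / γ for every n ∈ ℕ. -/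
/-! The IMEX matrix `A = (1 + γτ) • 1 - c • Δ`, `c = τν/hξ²`, is strictly row diagonally dominant
with margin `1 + γτ`: off the diagonal each row of `Δ` has absolute sum at most `2 = -Δᵢᵢ`.
Hence `A` is invertible (Gershgorin), so the scheme determines `Vⁿ` uniquely, and
`(1 + γτ) |U|_∞ ≤ |A U|_∞` (look at the row of `U` with the largest absolute sum). Every entry
of `N(V) + Gⁿ` is bounded by `C = μ C_W C_S + C_G`, so one step of the scheme gives
`(1 + γτ) |Vⁿ⁺¹|_∞ ≤ |Vⁿ|_∞ + τ n_x C`, and `n_x C / γ` is the fixed point of this affine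
recursion. -/

open Real Finset

/-- The `n × n` second-order centred finite-difference Laplacian incorporating
Neumann boundary conditions. -/
def neumannLaplacian (n : ℕ) : Matrix (Fin n) (Fin n) ℝ :=
  Matrix.of fun i j =>
    if (i : ℕ) = (j : ℕ) then -2
    else if (i : ℕ) = 0 ∧ (j : ℕ) = 1 then 2
    else if (i : ℕ) = n - 1 ∧ (j : ℕ) = n - 2 then 2
    else if (j : ℕ) + 1 = (i : ℕ) ∨ (i : ℕ) + 1 = (j : ℕ) then 1
    else 0

theorem existsUnique_seq_succ {α : Type*} (a : α) (f : ℕ → α → α) :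
    ∃! u : ℕ → α, u 0 = a ∧ ∀ n, u (n + 1) = f n (u n) :=
  ⟨fun n => Nat.rec a f n, ⟨rfl, fun _ => rfl⟩, fun v ⟨h0, hs⟩ => funext fun n => by
    induction n with
    | zero => exact h0
    | succ n ih => rw [hs, ih]⟩

theorem Matrix.existsUnique_seq_mul_succ {R m n : Type*} [CommRing R] [Fintype m] [DecidableEq m]
    {A : Matrix m m R} (hA : IsUnit A.det) (F : ℕ → Matrix m n R → Matrix m n R)
    (V₀ : Matrix m n R) :
    ∃! V : ℕ → Matrix m n R, V 0 = V₀ ∧ ∀ k, A * V (k + 1) = F k (V k) := by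
  have hsolve : ∀ X Y : Matrix m n R, A * X = Y ↔ X = A⁻¹ * Y := fun X Y =>
    ⟨fun h => h ▸ (A.nonsing_inv_mul_cancel_left X hA).symm,
      fun h => h ▸ A.mul_nonsing_inv_cancel_left Y hA⟩
  simpa only [hsolve] using existsUnique_seq_succ V₀ fun k X => A⁻¹ * F k X

theorem le_add_div_of_one_add_mul_le {a : ℕ → ℝ} {γ τ K : ℝ} (hγ : 0 < γ) (hτ : 0 ≤ τ)
    (hK : 0 ≤ K) (ha : 0 ≤ a 0) (h : ∀ n, (1 + γ * τ) * a (n + 1) ≤ a n + τ * K) (n : ℕ) :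
    a n ≤ a 0 + K / γ := by
  induction n with
  | zero => linarith [div_nonneg hK hγ.le]
  | succ n ih =>
    have hKγ : γ * (K / γ) = K := mul_div_cancel₀ K hγ.ne'
    refine le_of_mul_le_mul_left ((h n).trans ?_) (by positivity : 0 < 1 + γ * τ)
    nlinarith [mul_nonneg (mul_nonneg hγ.le hτ) ha]

theorem abs_sum_sum_mul_mul_le {ι κ : Type*} [Fintype ι] [Fintype κ] {f : ι → κ → ℝ} {C : ℝ}
    (hf : ∀ a b, |f a b| ≤ C) {ρ : ι → ℝ} {σ : κ → ℝ} (hρ : ∀ a, 0 ≤ ρ a) (hσ : ∀ b, 0 ≤ σ b) :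
    |∑ a, ∑ b, f a b * ρ a * σ b| ≤ C * ((∑ a, ρ a) * ∑ b, σ b) := by
  rw [sum_mul_sum, mul_sum]
  refine (abs_sum_le_sum_abs _ _).trans (sum_le_sum fun a _ => ?_)
  rw [mul_sum]
  refine (abs_sum_le_sum_abs _ _).trans (sum_le_sum fun b _ => ?_)
  rw [abs_mul, abs_mul, abs_of_nonneg (hρ a), abs_of_nonneg (hσ b), mul_assoc]
  exact mul_le_mul_of_nonneg_right (hf a b) (mul_nonneg (hρ a) (hσ b))

lemma neumannLaplacian_diag (n : ℕ) (i : Fin n) : neumannLaplacian n i i = -2 := by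
  simp [neumannLaplacian]

lemma neumannLaplacian_eq_zero {n : ℕ} {i j : Fin n} (hji : j ≠ i) (hj : (j : ℕ) + 1 ≠ i)
    (hj' : (i : ℕ) + 1 ≠ j) : neumannLaplacian n i j = 0 := by
  have := Fin.val_ne_of_ne hji
  simp only [neumannLaplacian, Matrix.of_apply]
  split_ifs <;> first | rfl | omega

lemma abs_neumannLaplacian_le {n : ℕ} (i j : Fin n) : |neumannLaplacian n i j| ≤ 2 := by
  simp only [neumannLaplacian, Matrix.of_apply]
  split_ifs <;> norm_num

lemma abs_neumannLaplacian_le_one {n : ℕ} {i j : Fin n} (hji : j ≠ i) (h0 : (i : ℕ) ≠ 0)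
    (hn : (i : ℕ) + 1 ≠ n) : |neumannLaplacian n i j| ≤ 1 := by
  have := Fin.val_ne_of_ne hji
  have := i.isLt
  simp only [neumannLaplacian, Matrix.of_apply]
  split_ifs <;> first | omega | norm_num

/-- Off the diagonal, row `i` lives on the columns `i ± 1`: a boundary row has one such column
(entry `2`), an interior row two (entries `1`). -/
lemma sum_erase_abs_neumannLaplacian_le (n : ℕ) (i : Fin n) :
    ∑ j ∈ univ.erase i, |neumannLaplacian n i j| ≤ 2 := by
  have hi := i.isLt
  have hzero : ∀ j ∈ univ.erase i, (j : ℕ) + 1 ≠ i → (i : ℕ) + 1 ≠ j →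
      |neumannLaplacian n i j| = 0 := fun j hj h h' => by
    rw [neumannLaplacian_eq_zero (ne_of_mem_erase hj) h h', abs_zero]
  by_cases hint : (i : ℕ) ≠ 0 ∧ (i : ℕ) + 1 ≠ n
  · set l : Fin n := ⟨i - 1, by omega⟩
    set r : Fin n := ⟨i + 1, by omega⟩
    rw [sum_eq_add_of_mem l r (by grind) (by grind) (by grind)
      (fun j hj hne => hzero j hj (by grind) (by grind))]
    linarith [abs_neumannLaplacian_le_one (j := l) (by grind) hint.1 hint.2,
      abs_neumannLaplacian_le_one (j := r) (by grind) hint.1 hint.2]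
  · set c : ℕ := if (i : ℕ) = 0 then 1 else (i : ℕ) - 1
    by_cases hcn : c < n
    · rw [sum_eq_single (⟨c, hcn⟩ : Fin n) (fun j hj hne => hzero j hj (by grind) (by grind))
        (by grind)]
      exact abs_neumannLaplacian_le _ _
    · rw [sum_eq_zero (fun j hj => hzero j hj (by grind) (by grind))]
      norm_num

lemma add_sum_erase_norm_le_norm_diag (n : ℕ) (a : ℝ) {c : ℝ} (hc : 0 ≤ c) (i : Fin n) :
    a + ∑ j ∈ univ.erase i, ‖(a • (1 : Matrix (Fin n) (Fin n) ℝ) - c • neumannLaplacian n) i j‖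
      ≤ ‖(a • (1 : Matrix (Fin n) (Fin n) ℝ) - c • neumannLaplacian n) i i‖ := by
  have hoff : ∀ j ∈ univ.erase i,
      ‖(a • (1 : Matrix (Fin n) (Fin n) ℝ) - c • neumannLaplacian n) i j‖
        = c * |neumannLaplacian n i j| := fun j hj => by
    simp [Matrix.one_apply_ne' (ne_of_mem_erase hj), abs_of_nonneg hc]
  rw [sum_congr rfl hoff, ← mul_sum]
  have hdiag : (a • (1 : Matrix (Fin n) (Fin n) ℝ) - c • neumannLaplacian n) i i = a + 2 * c := by
    simp only [Matrix.sub_apply, Matrix.smul_apply, Matrix.one_apply_eq, smul_eq_mul, mul_one,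
      neumannLaplacian_diag]
    ring
  rw [hdiag, Real.norm_eq_abs]
  nlinarith [sum_erase_abs_neumannLaplacian_le n i, le_abs_self (a + 2 * c)]

lemma matInfNorm_nonneg {m n : ℕ} (M : Matrix (Fin m) (Fin n) ℝ) : 0 ≤ matInfNorm M :=
  Real.iSup_nonneg fun _ => sum_nonneg fun _ _ => abs_nonneg _

section LinftyOpNorm

attribute [local instance] Matrix.linftyOpNormedAddCommGroup Matrix.linftyOpNormedSpace

variable {𝕜 m n : Type*} [NormedField 𝕜] [Fintype m]

lemma Matrix.norm_mul_sub_sum_le_norm_mul_apply [DecidableEq m] (M : Matrix m m 𝕜)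
    (U : Matrix m n 𝕜) (i : m) (j : n) :
    ‖M i i‖ * ‖U i j‖ - ∑ k ∈ univ.erase i, ‖M i k‖ * ‖U k j‖ ≤ ‖(M * U) i j‖ := by
  rw [Matrix.mul_apply, ← add_sum_erase _ _ (mem_univ i), ← norm_mul]
  calc ‖M i i * U i j‖ - ∑ k ∈ univ.erase i, ‖M i k‖ * ‖U k j‖
      ≤ ‖M i i * U i j‖ - ‖∑ k ∈ univ.erase i, M i k * U k j‖ := by
        gcongr
        exact (norm_sum_le _ _).trans (sum_le_sum fun k _ => norm_mul_le _ _)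
    _ ≤ _ := norm_sub_le_norm_add _ _

variable [Fintype n]

lemma Matrix.sum_norm_le_linfty_opNorm (A : Matrix m n 𝕜) (i : m) : ∑ j, ‖A i j‖ ≤ ‖A‖ :=
  (PiLp.norm_eq_of_L1 (WithLp.toLp 1 (A i))).symm.trans_le
    (norm_le_pi_norm (fun i => WithLp.toLp 1 (A i)) i)

lemma Matrix.linfty_opNorm_le_iff [Nonempty m] {A : Matrix m n 𝕜} {C : ℝ} :
    ‖A‖ ≤ C ↔ ∀ i, ∑ j, ‖A i j‖ ≤ C := by
  change ‖fun i => WithLp.toLp 1 (A i)‖ ≤ C ↔ _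
  simp only [pi_norm_le_iff_of_nonempty, PiLp.norm_eq_of_L1]

lemma Matrix.linfty_opNorm_le_card_mul [Nonempty m] {A : Matrix m n 𝕜} {C : ℝ}
    (h : ∀ i j, ‖A i j‖ ≤ C) : ‖A‖ ≤ Fintype.card n * C :=
  Matrix.linfty_opNorm_le_iff.2 fun i =>
    (sum_le_sum fun j _ => h i j).trans_eq (by simp)

lemma Matrix.linfty_opNorm_eq_of_forall_le {A : Matrix m n 𝕜} {i : m}
    (hi : ∀ k, ∑ j, ‖A k j‖ ≤ ∑ j, ‖A i j‖) : ‖A‖ = ∑ j, ‖A i j‖ :=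
  have : Nonempty m := ⟨i⟩
  le_antisymm (Matrix.linfty_opNorm_le_iff.2 hi) (A.sum_norm_le_linfty_opNorm i)

theorem Matrix.mul_norm_le_norm_mul_of_diagDominant [DecidableEq m] {M : Matrix m m 𝕜} {δ : ℝ}
    (hM : ∀ i, δ + ∑ k ∈ univ.erase i, ‖M i k‖ ≤ ‖M i i‖) (U : Matrix m n 𝕜) :
    δ * ‖U‖ ≤ ‖M * U‖ := by
  cases isEmpty_or_nonempty m
  · simp [Subsingleton.elim U 0]
  set r : m → ℝ := fun k => ∑ j, ‖U k j‖
  obtain ⟨i, hi⟩ := Finite.exists_max r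
  have hr : ∀ k, 0 ≤ r k := fun k => sum_nonneg fun j _ => norm_nonneg _
  calc δ * ‖U‖ = δ * r i := by rw [U.linfty_opNorm_eq_of_forall_le hi]
    _ ≤ ‖M i i‖ * r i - ∑ k ∈ univ.erase i, ‖M i k‖ * r i := by
        rw [← sum_mul]; nlinarith [hM i, hr i]
    _ ≤ ‖M i i‖ * r i - ∑ k ∈ univ.erase i, ‖M i k‖ * r k := by
        gcongr with k; exact hi k
    _ = ∑ j, (‖M i i‖ * ‖U i j‖ - ∑ k ∈ univ.erase i, ‖M i k‖ * ‖U k j‖) := by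
        simp only [r, sum_sub_distrib, mul_sum]; rw [sum_comm]
    _ ≤ ∑ j, ‖(M * U) i j‖ :=
        sum_le_sum fun j _ => M.norm_mul_sub_sum_le_norm_mul_apply U i j
    _ ≤ ‖M * U‖ := (M * U).sum_norm_le_linfty_opNorm i

lemma matInfNorm_eq_norm {m n : ℕ} (M : Matrix (Fin m) (Fin n) ℝ) : matInfNorm M = ‖M‖ := by
  rcases isEmpty_or_nonempty (Fin m)
  · simp [matInfNorm, Subsingleton.elim M 0]
  · exact le_antisymm (Real.iSup_le M.sum_norm_le_linfty_opNorm (norm_nonneg _))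
      (Matrix.linfty_opNorm_le_iff.2 fun i =>
        le_ciSup (f := fun i => ∑ j, |M i j|) (Set.finite_range _).bddAbove i)

theorem mul_matInfNorm_le_of_mul_eq_add_smul {m n : ℕ} [NeZero m] {A : Matrix (Fin m) (Fin m) ℝ}
    {δ τ C : ℝ} (hA : ∀ i, δ + ∑ k ∈ univ.erase i, ‖A i k‖ ≤ ‖A i i‖) (hτ : 0 ≤ τ)
    {U V E : Matrix (Fin m) (Fin n) ℝ} (hE : ∀ i j, |E i j| ≤ C) (hU : A * U = V + τ • E) :
    δ * matInfNorm U ≤ matInfNorm V + τ * (n * C) := by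
  rw [matInfNorm_eq_norm, matInfNorm_eq_norm]
  calc δ * ‖U‖ ≤ ‖A * U‖ := Matrix.mul_norm_le_norm_mul_of_diagDominant hA U
    _ = ‖V + τ • E‖ := by rw [hU]
    _ ≤ ‖V‖ + τ * ‖E‖ := by
        refine (norm_add_le _ _).trans_eq ?_
        rw [norm_smul, Real.norm_of_nonneg hτ]
    _ ≤ ‖V‖ + τ * (n * C) := by
        gcongr; simpa using Matrix.linfty_opNorm_le_card_mul (A := E) hE

end LinftyOpNorm

theorem IMEX_boundedness_general (nξ nx : ℕ) (hnξ : 2 ≤ nξ) (hnx : 1 ≤ nx)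
    (γ ν τ hξ : ℝ) (hγ : 0 < γ) (hν : 0 < ν) (hτ : 0 < τ)
    (A : Matrix (Fin nξ) (Fin nξ) ℝ)
    (hA : A = (1 + γ * τ) • (1 : Matrix (Fin nξ) (Fin nξ) ℝ)
            - (τ * ν / hξ ^ 2) • neumannLaplacian nξ)
    (x : Fin nx → ℝ) (ξ : Fin nξ → ℝ)
    (ρ : Fin nx → ℝ) (σ : Fin nξ → ℝ)
    (hρ : ∀ j, 0 ≤ ρ j) (hσ : ∀ i, 0 ≤ σ i)
    (W : ℝ → ℝ → ℝ → ℝ → ℝ) (S : ℝ → ℝ) (CW CS CG μ : ℝ)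
    (hW : ∀ a b c d, |W a b c d| ≤ CW) (hS : ∀ v, |S v| ≤ CS)
    (hμ : (∑ j, ρ j) * (∑ i, σ i) = μ)
    (N : Matrix (Fin nξ) (Fin nx) ℝ → Matrix (Fin nξ) (Fin nx) ℝ)
    (hN : ∀ V i j, N V i j
        = ∑ j', ∑ i', W (x j) (ξ i) (x j') (ξ i') * S (V i' j') * ρ j' * σ i')
    (G : ℕ → Matrix (Fin nξ) (Fin nx) ℝ) (hG : ∀ n i j, |G n i j| ≤ CG)
    (V0 : Matrix (Fin nξ) (Fin nx) ℝ) :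
    (∃! V : ℕ → Matrix (Fin nξ) (Fin nx) ℝ,
        V 0 = V0 ∧ ∀ n : ℕ, A * V (n + 1) = V n + τ • N (V n) + τ • G n) ∧
    (∀ V : ℕ → Matrix (Fin nξ) (Fin nx) ℝ,
        (V 0 = V0 ∧ ∀ n : ℕ, A * V (n + 1) = V n + τ • N (V n) + τ • G n) →
        ∀ n : ℕ, matInfNorm (V n) ≤ matInfNorm V0 + nx * (μ * CW * CS + CG) / γ) := by
  have : NeZero nξ := ⟨by omega⟩
  have : NeZero nx := ⟨by omega⟩
  have hdom : ∀ i, (1 + γ * τ) + ∑ k ∈ univ.erase i, ‖A i k‖ ≤ ‖A i i‖ :=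
    hA ▸ add_sum_erase_norm_le_norm_diag nξ _ (by positivity)
  have hdet : IsUnit A.det :=
    (det_ne_zero_of_sum_row_lt_diag fun i => by nlinarith [hdom i, mul_pos hγ hτ]).isUnit
  have hWS : ∀ a b c d v, |W a b c d * S v| ≤ CW * CS := fun a b c d v =>
    (abs_mul _ _).trans_le
      (mul_le_mul (hW a b c d) (hS v) (abs_nonneg _) ((abs_nonneg _).trans (hW a b c d)))
  have hE : ∀ V k i j, |(N V + G k) i j| ≤ μ * CW * CS + CG := fun V k i j => by
    refine (abs_add_le _ _).trans (add_le_add ?_ (hG k i j))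
    rw [hN, show μ * CW * CS = CW * CS * μ by ring, ← hμ]
    exact abs_sum_sum_mul_mul_le (fun j' i' => hWS _ _ _ _ _) hρ hσ
  refine ⟨Matrix.existsUnique_seq_mul_succ hdet (fun k X => X + τ • N X + τ • G k) V0, ?_⟩
  rintro V ⟨rfl, hV⟩ n
  refine le_add_div_of_one_add_mul_le (a := fun k => matInfNorm (V k)) hγ hτ.le
    (mul_nonneg (Nat.cast_nonneg _) ((abs_nonneg _).trans (hE (V 0) 0 0 0)))
    (matInfNorm_nonneg _) (fun k => ?_) n
  exact mul_matInfNorm_le_of_mul_eq_add_smul hdom hτ.le (hE (V k) k)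
    (by rw [hV, smul_add, add_assoc])

/-- (Boundedness of the IMEX solution.) There is a unique sequence `(Vⁿ)` with
`V⁰ = V₀` satisfying the IMEX scheme `A Vⁿ = Vⁿ⁻¹ + τ N(Vⁿ⁻¹) + τ Gⁿ⁻¹`, it is
bounded, and `|Vⁿ|_∞ ≤ |V⁰|_∞ + n_x (μ C_W C_S + C_G)/γ` for all `n`. -/
theorem IMEX_boundedness (nξ nx : ℕ) (hnξ : 2 ≤ nξ) (hnx : 1 ≤ nx)
    (γ ν τ hξ : ℝ) (hγ : 0 < γ) (hν : 0 < ν) (hτ : 0 < τ) (hhξ : 0 < hξ)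
    (A : Matrix (Fin nξ) (Fin nξ) ℝ)
    (hA : A = (1 + γ * τ) • (1 : Matrix (Fin nξ) (Fin nξ) ℝ)
            - (τ * ν / hξ ^ 2) • neumannLaplacian nξ)
    (x : Fin nx → ℝ) (ξ : Fin nξ → ℝ)
    (ρ : Fin nx → ℝ) (σ : Fin nξ → ℝ)
    (hρ : ∀ j, 0 ≤ ρ j) (hσ : ∀ i, 0 ≤ σ i)
    (W : ℝ → ℝ → ℝ → ℝ → ℝ) (S : ℝ → ℝ) (CW CS CG μ : ℝ)
    (hW : ∀ a b c d, |W a b c d| ≤ CW) (hS : ∀ v, |S v| ≤ CS)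
    (hμ : (∑ j, ρ j) * (∑ i, σ i) = μ)
    (N : Matrix (Fin nξ) (Fin nx) ℝ → Matrix (Fin nξ) (Fin nx) ℝ)
    (hN : ∀ V i j, N V i j
        = ∑ j', ∑ i', W (x j) (ξ i) (x j') (ξ i') * S (V i' j') * ρ j' * σ i')
    (G : ℕ → Matrix (Fin nξ) (Fin nx) ℝ) (hG : ∀ n i j, |G n i j| ≤ CG)
    (V0 : Matrix (Fin nξ) (Fin nx) ℝ) :
    (∃! V : ℕ → Matrix (Fin nξ) (Fin nx) ℝ,
        V 0 = V0 ∧ ∀ n : ℕ, A * V (n + 1) = V n + τ • N (V n) + τ • G n) ∧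
    (∀ V : ℕ → Matrix (Fin nξ) (Fin nx) ℝ,
        (V 0 = V0 ∧ ∀ n : ℕ, A * V (n + 1) = V n + τ • N (V n) + τ • G n) →
        ∀ n : ℕ, matInfNorm (V n) ≤ matInfNorm V0 + nx * (μ * CW * CS + CG) / γ) :=
  IMEX_boundedness_general nξ nx hnξ hnx γ ν τ hξ hγ hν hτ A hA x ξ ρ σ hρ hσ W S CW CS CG μ hW hS
    hμ N hN G hG V0
end

section
/- Let ν > 0, a > 0 and ξ ∈ ℝ. Then the improper integral of t ↦ e^{−at} · e^{−ξ²/(4νt)} / √(4πνt) over (0, ∞) converges and equals e^{−√(a/ν) |ξ|} / (2 √(aν)). Equivalently, with ψ = √(a/ν), the integral equals exp(−ψ|ξ|)/(2ψν). -/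
/-!
After the substitution `t = s²` the integral becomes `(πν)^{-1/2} ∫₀^∞ exp(-a s² - b²/s²) ds` with
`b = ξ / (2√ν)`. Completing the square, `a s² + b²/s² = (u - c/u)² + 2c` with `u = √a s` and
`c = √a |b|`. The Cauchy–Schlömilch substitution `u ↦ u - c/u` maps `(0, ∞)` bijectively onto `ℝ`
with Jacobian `1 + c/u²`, and the inversion `u ↦ c/u` turns the `c/u²` part back into the plain
integral, so `∫₀^∞ g(u - c/u) du = ½ ∫_ℝ g` for every even integrable `g`. For the Gaussian this
gives `√(π/a)/2 · exp(-2√a |b|)`.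
-/

open Real MeasureTheory Set

section ChangeOfVariables

variable {E : Type*} [NormedAddCommGroup E] [NormedSpace ℝ E]

lemma integral_comp_sq_Ioi (g : ℝ → E) :
    ∫ s in Ioi 0, (2 * s) • g (s ^ 2) = ∫ t in Ioi 0, g t := by
  rw [← integral_comp_rpow_Ioi_of_pos (g := g) two_pos]
  refine setIntegral_congr_fun measurableSet_Ioi (fun s _ => ?_)
  norm_num

lemma integrableOn_Ioi_comp_sq_iff (g : ℝ → E) :
    IntegrableOn (fun s => (2 * s) • g (s ^ 2)) (Ioi 0) ↔ IntegrableOn g (Ioi 0) := by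
  rw [← integrableOn_Ioi_comp_rpow_iff g two_ne_zero]
  refine integrableOn_congr_fun (fun s _ => ?_) measurableSet_Ioi
  norm_num

variable {c : ℝ}

lemma image_sub_div_Ioi (hc : 0 < c) : (fun u : ℝ => u - c / u) '' Ioi 0 = univ := by
  refine eq_univ_of_forall fun w => ?_
  set r := √(w ^ 2 + 4 * c)
  have hr : |w| < r := by
    rw [← sqrt_sq_eq_abs]
    exact sqrt_lt_sqrt (sq_nonneg w) (by linarith)
  have hr_sq : r ^ 2 = w ^ 2 + 4 * c := sq_sqrt (by positivity)
  have hu : 0 < w + r := by linarith [neg_abs_le w]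
  refine ⟨(w + r) / 2, half_pos hu, ?_⟩
  field_simp
  nlinarith

lemma injOn_sub_div_Ioi (hc : 0 ≤ c) : InjOn (fun u : ℝ => u - c / u) (Ioi 0) := by
  intro x (hx : 0 < x) y (hy : 0 < y) h
  have h' : (x - y) * (x * y + c) = 0 := by
    field_simp at h
    linear_combination h
  rcases mul_eq_zero.mp h' with h' | h'
  · linarith
  · nlinarith [mul_pos hx hy]

lemma hasDerivAt_sub_div {u : ℝ} (hu : u ≠ 0) :
    HasDerivAt (fun u : ℝ => u - c / u) (1 + c / u ^ 2) u := by
  simpa [div_eq_mul_inv] using (hasDerivAt_id' u).fun_sub ((hasDerivAt_inv hu).const_mul c)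

lemma integrableOn_Ioi_smul_comp_sub_div_iff (hc : 0 < c) (g : ℝ → E) :
    IntegrableOn (fun u => (1 + c / u ^ 2) • g (u - c / u)) (Ioi 0) ↔ Integrable g := by
  rw [← integrableOn_univ, ← image_sub_div_Ioi hc,
    integrableOn_image_iff_integrableOn_abs_deriv_smul measurableSet_Ioi
      (fun u hu => (hasDerivAt_sub_div (ne_of_gt hu)).hasDerivWithinAt) (injOn_sub_div_Ioi hc.le)]
  refine integrableOn_congr_fun (fun u _ => ?_) measurableSet_Ioi
  rw [abs_of_pos (by positivity)]

lemma integral_smul_comp_sub_div_Ioi (hc : 0 < c) (g : ℝ → E) :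
    ∫ u in Ioi 0, (1 + c / u ^ 2) • g (u - c / u) = ∫ x, g x := by
  conv_rhs => rw [← setIntegral_univ, ← image_sub_div_Ioi hc,
    integral_image_eq_integral_abs_deriv_smul measurableSet_Ioi
      (fun u hu => (hasDerivAt_sub_div (ne_of_gt hu)).hasDerivWithinAt) (injOn_sub_div_Ioi hc.le)]
  refine setIntegral_congr_fun measurableSet_Ioi (fun u _ => ?_)
  rw [abs_of_pos (by positivity)]

lemma integral_smul_comp_div_Ioi (hc : 0 < c) (f : ℝ → E) :
    ∫ v in Ioi 0, (c / v ^ 2) • f (c / v) = ∫ u in Ioi 0, f u := by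
  have himage : (fun v : ℝ => c / v) '' Ioi 0 = Ioi 0 := by
    refine Subset.antisymm ?_ fun u (hu : 0 < u) => ⟨c / u, div_pos hc hu, by field_simp⟩
    rintro _ ⟨v, hv : 0 < v, rfl⟩
    exact div_pos hc hv
  have hderiv (v : ℝ) (hv : v ∈ Ioi 0) :
      HasDerivWithinAt (fun v : ℝ => c / v) (-(c / v ^ 2)) (Ioi 0) v := by
    simpa [div_eq_mul_inv] using ((hasDerivAt_inv (ne_of_gt hv)).const_mul c).hasDerivWithinAt
  have hinj : InjOn (fun v : ℝ => c / v) (Ioi 0) := fun x _ y _ h => by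
    simpa [div_eq_mul_inv, hc.ne'] using h
  conv_rhs =>
    rw [← himage, integral_image_eq_integral_abs_deriv_smul measurableSet_Ioi hderiv hinj]
  refine setIntegral_congr_fun measurableSet_Ioi (fun v _ => ?_)
  rw [abs_neg, abs_of_nonneg (by positivity)]

lemma integrableOn_Ioi_comp_sub_div (hc : 0 < c) {g : ℝ → E} (hg : Integrable g) :
    IntegrableOn (fun u => g (u - c / u)) (Ioi 0) := by
  have hweight (u : ℝ) : 0 < 1 + c / u ^ 2 := by positivity
  have h := ((integrableOn_Ioi_smul_comp_sub_div_iff hc g).mpr hg).bdd_smul 1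
    (φ := fun u => (1 + c / u ^ 2)⁻¹) (Measurable.aestronglyMeasurable (by fun_prop)) <|
      ae_of_all _ fun u => by
      rw [norm_inv, norm_of_nonneg (hweight u).le]
      exact inv_le_one_of_one_le₀ (by linarith [div_nonneg hc.le (sq_nonneg u)])
  refine IntegrableOn.congr_fun h (fun u _ => ?_) measurableSet_Ioi
  simp [smul_smul, inv_mul_cancel₀ (hweight u).ne']

-- The Cauchy–Schlömilch transformation.
theorem integral_comp_sub_div_Ioi_of_even (hc : 0 < c) {g : ℝ → E} (hg : Integrable g)
    (heven : Function.Even g) :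
    ∫ u in Ioi 0, g (u - c / u) = (2 : ℝ)⁻¹ • ∫ x, g x := by
  have hG := integrableOn_Ioi_comp_sub_div hc hg
  have hweighted := (integrableOn_Ioi_smul_comp_sub_div_iff hc g).mpr hg
  have hreflect : ∫ u in Ioi 0, (c / u ^ 2) • g (u - c / u) = ∫ u in Ioi 0, g (u - c / u) := by
    rw [← integral_smul_comp_div_Ioi hc (fun u => g (u - c / u))]
    refine setIntegral_congr_fun measurableSet_Ioi (fun v (hv : 0 < v) => ?_)
    rw [← heven]
    congr 2
    field_simp
    exact neg_sub _ _
  have hsplit : ∫ u in Ioi 0, (1 + c / u ^ 2) • g (u - c / u)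
      = (∫ u in Ioi 0, g (u - c / u)) + ∫ u in Ioi 0, (c / u ^ 2) • g (u - c / u) := by
    have hrest : IntegrableOn (fun u => (c / u ^ 2) • g (u - c / u)) (Ioi 0) := by
      refine (hweighted.sub hG).congr_fun (fun u _ => ?_) measurableSet_Ioi
      simp [add_smul]
    rw [← integral_add hG hrest]
    simp only [add_smul, one_smul]
  rw [integral_smul_comp_sub_div_Ioi hc, hreflect] at hsplit
  rw [hsplit, ← two_smul ℝ (∫ u in Ioi 0, g (u - c / u)), smul_smul, inv_mul_cancel₀ two_ne_zero,
    one_smul]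

end ChangeOfVariables

lemma integrable_exp_neg_mul_sq_sub_div_sq {a : ℝ} (ha : 0 < a) (b : ℝ) :
    Integrable fun s : ℝ => exp (-a * s ^ 2 - b ^ 2 / s ^ 2) := by
  refine (integrable_exp_neg_mul_sq ha).mono (by fun_prop) (ae_of_all _ fun s => ?_)
  simp only [norm_of_nonneg (exp_pos _).le, exp_le_exp]
  have : 0 ≤ b ^ 2 / s ^ 2 := by positivity
  linarith

lemma integral_exp_neg_mul_sq_sub_div_sq_Ioi {a : ℝ} (ha : 0 < a) (b : ℝ) :
    ∫ s in Ioi 0, exp (-a * s ^ 2 - b ^ 2 / s ^ 2) = √(π / a) / 2 * exp (-2 * √a * |b|) := by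
  rcases eq_or_ne b 0 with rfl | hb
  · simpa using integral_gaussian_Ioi a
  have hsa : 0 < √a := sqrt_pos.mpr ha
  have hc : 0 < √a * |b| := by positivity
  have hsquare (s : ℝ) (hs : s ∈ Ioi 0) : exp (-a * s ^ 2 - b ^ 2 / s ^ 2)
      = exp (-2 * √a * |b|) * exp (-(√a * s - √a * |b| / (√a * s)) ^ 2) := by
    have hs : s ≠ 0 := ne_of_gt hs
    rw [← exp_add, mul_div_mul_left _ _ hsa.ne', sub_sq, mul_pow, div_pow, sq_sqrt ha.le, sq_abs]
    congr 1
    field_simp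
    ring
  have hgauss : ∫ u in Ioi 0, exp (-(u - √a * |b| / u) ^ 2) = √π / 2 := by
    have h := integral_comp_sub_div_Ioi_of_even hc (g := fun x => exp (-x ^ 2))
      (by simpa using integrable_exp_neg_mul_sq one_pos) (fun x => by simp)
    have hfull : ∫ x, exp (-x ^ 2) = √π := by simpa using integral_gaussian 1
    rw [h, hfull, smul_eq_mul, div_eq_inv_mul]
  rw [setIntegral_congr_fun measurableSet_Ioi hsquare, integral_const_mul,
    integral_comp_mul_left_Ioi (fun u => exp (-(u - √a * |b| / u) ^ 2)) 0 hsa, mul_zero, hgauss,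
    sqrt_div' _ ha.le, smul_eq_mul]
  ring

/-- The Laplace transform of the cable-equation Green's function:
`∫_0^∞ e^{-at} e^{-ξ²/(4νt)}/√(4πνt) dt = e^{-√(a/ν)|ξ|}/(2√(aν))`. -/
theorem laplace_transform_cable_green (ν a : ℝ) (hν : 0 < ν) (ha : 0 < a) (ξ : ℝ) :
    IntegrableOn
      (fun t : ℝ => Real.exp (-a * t) * Real.exp (-ξ ^ 2 / (4 * ν * t))
        / Real.sqrt (4 * π * ν * t)) (Set.Ioi 0) ∧
    ∫ t in Set.Ioi (0 : ℝ),
        Real.exp (-a * t) * Real.exp (-ξ ^ 2 / (4 * ν * t)) / Real.sqrt (4 * π * ν * t)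
      = Real.exp (-Real.sqrt (a / ν) * |ξ|) / (2 * Real.sqrt (a * ν)) := by
  set b := ξ / (2 * √ν)
  have hsν : 0 < √ν := sqrt_pos.mpr hν
  have hb : b ^ 2 = ξ ^ 2 / (4 * ν) := by rw [div_pow, mul_pow, sq_sqrt hν.le]; ring
  have hsubst (s : ℝ) (hs : s ∈ Ioi 0) :
      (2 * s) • (exp (-a * s ^ 2) * exp (-ξ ^ 2 / (4 * ν * s ^ 2)) / √(4 * π * ν * s ^ 2))
        = (√(π * ν))⁻¹ * exp (-a * s ^ 2 - b ^ 2 / s ^ 2) := by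
    have hs : 0 < s := hs
    rw [show 4 * π * ν * s ^ 2 = (2 * s) ^ 2 * (π * ν) by ring, sqrt_mul' _ (by positivity),
      sqrt_sq (by positivity), sub_eq_add_neg, exp_add, smul_eq_mul, hb]
    field_simp
  constructor
  · rw [← integrableOn_Ioi_comp_sq_iff]
    exact IntegrableOn.congr_fun
      ((integrable_exp_neg_mul_sq_sub_div_sq ha b).integrableOn.const_mul _)
      (fun s hs => (hsubst s hs).symm) measurableSet_Ioi
  · rw [← integral_comp_sq_Ioi, setIntegral_congr_fun measurableSet_Ioi hsubst, integral_const_mul,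
      integral_exp_neg_mul_sq_sub_div_sq_Ioi ha]
    have hexponent : -2 * √a * |b| = -√(a / ν) * |ξ| := by
      rw [abs_div, abs_of_pos (by positivity : 0 < 2 * √ν), sqrt_div' _ hν.le]
      field_simp
    rw [hexponent, sqrt_mul' _ hν.le, sqrt_div' _ ha.le, sqrt_mul' _ hν.le]
    field_simp
end
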